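/- For a positive integer k, define J_n = ∫_{[0,1]^k} ⟨x_1⋯x_k⟩_n dx_1⋯dx_k where ⟨x⟩_n = x(x+1)⋯(x+n−1). Then for all n ≥ 1, J_n^2 − J_{n−1} J_{n+1} ≤ −J_{n−1} · ∫_{[0,1]^k} (x_1⋯x_k) ⟨x_1⋯x_k⟩_n dx_1⋯dx_k ≤ 0; in particular J_{n+1} ≥ J_n · J_n / J_{n−1}. -/

import Mathlib

/-! Since `⟨p⟩_{n+1} = p ⟨p⟩_n + n ⟨p⟩_n`, integrating gives `J (n+1) = I n + n J n` with
`I n = ∫ p ⟨p⟩_n`. As `0 ≤ p ≤ 1` on the cube, `I n ≤ J n`, so `J (n+1) ≤ (n+1) J n`, and then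
`J n ^ 2 - J (n-1) J (n+1) = J n (J n - n J (n-1)) - J (n-1) I n ≤ - J (n-1) I n`. -/

open MeasureTheory Finset

/-- Integral of `f (x₁ ⋯ x_k)` over the unit cube `[0,1]^k`. -/
noncomputable def cubeInt (k : ℕ) (f : ℝ → ℝ) : ℝ :=
  ∫ x : Fin k → ℝ in Set.univ.pi fun _ => Set.Icc (0:ℝ) 1, f (∏ i, x i)

section cubeInt

variable {k : ℕ}

lemma prod_mem_Icc_of_mem_cube {x : Fin k → ℝ}
    (hx : x ∈ Set.univ.pi fun _ : Fin k => Set.Icc (0:ℝ) 1) :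
    ∏ i, x i ∈ Set.Icc (0:ℝ) 1 :=
  ⟨prod_nonneg fun i _ => (hx i trivial).1,
    prod_le_one (fun i _ => (hx i trivial).1) fun i _ => (hx i trivial).2⟩

lemma integrableOn_cube_comp_prod {f : ℝ → ℝ} (hf : Continuous f) :
    IntegrableOn (fun x : Fin k → ℝ => f (∏ i, x i))
      (Set.univ.pi fun _ : Fin k => Set.Icc (0:ℝ) 1) :=
  (hf.comp (by fun_prop)).continuousOn.integrableOn_compact (isCompact_univ_pi fun _ => isCompact_Icc)

lemma cubeInt_nonneg {f : ℝ → ℝ} (h : ∀ p ∈ Set.Icc (0:ℝ) 1, 0 ≤ f p) : 0 ≤ cubeInt k f :=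
  setIntegral_nonneg (MeasurableSet.univ_pi fun _ => measurableSet_Icc)
    fun _ hx => h _ (prod_mem_Icc_of_mem_cube hx)

lemma cubeInt_mono {f g : ℝ → ℝ} (hf : Continuous f) (hg : Continuous g)
    (h : ∀ p ∈ Set.Icc (0:ℝ) 1, f p ≤ g p) : cubeInt k f ≤ cubeInt k g :=
  setIntegral_mono_on (integrableOn_cube_comp_prod hf) (integrableOn_cube_comp_prod hg)
    (MeasurableSet.univ_pi fun _ => measurableSet_Icc)
    fun _ hx => h _ (prod_mem_Icc_of_mem_cube hx)

lemma cubeInt_add {f g : ℝ → ℝ} (hf : Continuous f) (hg : Continuous g) :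
    cubeInt k (fun p => f p + g p) = cubeInt k f + cubeInt k g :=
  integral_add (integrableOn_cube_comp_prod hf) (integrableOn_cube_comp_prod hg)

lemma cubeInt_const_mul (c : ℝ) (f : ℝ → ℝ) :
    cubeInt k (fun p => c * f p) = c * cubeInt k f :=
  integral_const_mul c _

end cubeInt

section risingProd

lemma prod_range_add_nonneg {p : ℝ} (hp : 0 ≤ p) (n : ℕ) : 0 ≤ ∏ i ∈ range n, (p + i) :=
  prod_nonneg fun _ _ => by positivity

lemma prod_range_succ_add (p : ℝ) (n : ℕ) :
    ∏ i ∈ range (n + 1), (p + i) = p * ∏ i ∈ range n, (p + i) + n * ∏ i ∈ range n, (p + i) := by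
  rw [prod_range_succ]; ring

variable (k n : ℕ)

lemma cubeInt_prod_range_succ_add :
    (cubeInt k fun p => ∏ i ∈ range (n + 1), (p + i)) =
      (cubeInt k fun p => p * ∏ i ∈ range n, (p + i)) +
        n * cubeInt k fun p => ∏ i ∈ range n, (p + i) := by
  simp_rw [prod_range_succ_add]
  rw [cubeInt_add (by fun_prop) (by fun_prop), cubeInt_const_mul]

lemma cubeInt_mul_prod_range_add_le :
    (cubeInt k fun p => p * ∏ i ∈ range n, (p + i)) ≤ cubeInt k fun p => ∏ i ∈ range n, (p + i) :=
  cubeInt_mono (by fun_prop) (by fun_prop)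
    fun _ hp => mul_le_of_le_one_left (prod_range_add_nonneg hp.1 n) hp.2

lemma cubeInt_prod_range_succ_add_le :
    (cubeInt k fun p => ∏ i ∈ range (n + 1), (p + i)) ≤
      (n + 1) * cubeInt k fun p => ∏ i ∈ range n, (p + i) := by
  rw [cubeInt_prod_range_succ_add]
  linarith [cubeInt_mul_prod_range_add_le k n]

end risingProd

lemma sq_sub_mul_le_of_eq_add_mul {a b c d t : ℝ} (hc : c = d + t * b) (hb : b ≤ t * a)
    (hb₀ : 0 ≤ b) : b ^ 2 - a * c ≤ -(a * d) := by
  rw [hc]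
  nlinarith [mul_le_mul_of_nonneg_left hb hb₀]

lemma mul_self_div_le_of_sq_sub_mul_nonpos {a b c : ℝ} (ha : 0 ≤ a) (hc : 0 ≤ c)
    (h : b ^ 2 - a * c ≤ 0) : b * b / a ≤ c := by
  rcases ha.eq_or_lt with rfl | ha
  · simpa using hc
  · rw [div_le_iff₀ ha]
    nlinarith

theorem stmt_18_general (k : ℕ)
    (J : ℕ → ℝ)
    (hJ : ∀ n, J n = cubeInt k fun p => ∏ i ∈ Finset.range n, (p + i)) :
    ∀ n : ℕ, 1 ≤ n →
      J n ^ 2 - J (n - 1) * J (n + 1) ≤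
          -(J (n - 1) * cubeInt k fun p => p * ∏ i ∈ Finset.range n, (p + i)) ∧
        -(J (n - 1) * cubeInt k fun p => p * ∏ i ∈ Finset.range n, (p + i)) ≤ 0 ∧
          J n * J n / J (n - 1) ≤ J (n + 1) := by
  intro n hn
  obtain ⟨m, rfl⟩ := Nat.exists_eq_add_of_le' hn
  rw [Nat.add_sub_cancel]
  have hJ₀ : ∀ n, 0 ≤ J n := fun n =>
    (hJ n).symm ▸ cubeInt_nonneg fun p hp => prod_range_add_nonneg hp.1 n
  have hI₀ : 0 ≤ cubeInt k fun p => p * ∏ i ∈ range (m + 1), (p + i) :=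
    cubeInt_nonneg fun p hp => mul_nonneg hp.1 (prod_range_add_nonneg hp.1 _)
  have hrec : J (m + 1 + 1) = (cubeInt k fun p => p * ∏ i ∈ range (m + 1), (p + i)) +
      ((m + 1 : ℕ) : ℝ) * J (m + 1) := by
    rw [hJ, hJ, cubeInt_prod_range_succ_add]
  have hle : J (m + 1) ≤ ((m + 1 : ℕ) : ℝ) * J m := by
    rw [hJ, hJ, Nat.cast_succ]
    exact cubeInt_prod_range_succ_add_le k m
  have hgap := sq_sub_mul_le_of_eq_add_mul hrec hle (hJ₀ _)
  have hneg : -(J m * cubeInt k fun p => p * ∏ i ∈ range (m + 1), (p + i)) ≤ 0 :=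
    neg_nonpos.mpr (mul_nonneg (hJ₀ m) hI₀)
  exact ⟨hgap, hneg, mul_self_div_le_of_sq_sub_mul_nonpos (hJ₀ m) (hJ₀ _) (hgap.trans hneg)⟩

/-- For `J n = ∫_{[0,1]^k} ⟨p⟩_n` and `n ≥ 1`:
`J n ^2 − J (n−1) J (n+1) ≤ − J (n−1) ∫ p⟨p⟩_n ≤ 0`, and in particular
`J n * J n / J (n−1) ≤ J (n+1)`. -/
theorem stmt_18 (k : ℕ) (hk : 0 < k)
    (J : ℕ → ℝ)
    (hJ : ∀ n, J n = cubeInt k fun p => ∏ i ∈ Finset.range n, (p + i)) :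
    ∀ n : ℕ, 1 ≤ n →
      J n ^ 2 - J (n - 1) * J (n + 1) ≤
          -(J (n - 1) * cubeInt k fun p => p * ∏ i ∈ Finset.range n, (p + i)) ∧
        -(J (n - 1) * cubeInt k fun p => p * ∏ i ∈ Finset.range n, (p + i)) ≤ 0 ∧
          J n * J n / J (n - 1) ≤ J (n + 1) :=
  stmt_18_general k J hJ
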